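/- arXiv:2511.15099 — 2 statements merged into one kernel-verified Lean document; each statement's English description precedes it below -/
import Mathlib

section
/- Let α > 0 be a constant (the ratio of community infection pressures α₀(t)) and, for j ∈ {0,1}, vaccination-date labels a ∈ {v,∞}, deferral labels d ∈ {0,t} and subgroup labels A ∈ {A_v, A_∞}, let λ_j^{(a,d),A} > 0 be positive reals (the limits as ε↓0 of the counterfactual conditional failure probabilities q_j^{(a,d)}(ε|A)/ε, all assumed to exist and be positive). Assume: (Assumption 5) λ₁^{(∞,t),A_v}/λ₀^{(∞,t),A_v} = α and λ₁^{(∞,t),A_∞}/λ₀^{(∞,t),A_∞} = α; (Assumption 6) λ₀^{(v,t),A_v} = λ₀^{(∞,t),A_v}; (Assumption 7) λ_j^{(v,t),A_v} = λ_j^{(v,0),A_v} and λ_j^{(∞,t),A_∞} = λ_j^{(∞,0),A_∞} for j ∈ {0,1}. Then the causal parameter θ_C := λ₁^{(v,0),A_v}/λ₁^{(∞,t),A_v} satisfies θ_C = [λ₁^{(v,0),A_v}/λ₁^{(∞,0),A_∞}] / [λ₀^{(v,0),A_v}/λ₀^{(∞,0),A_∞}], i.e., θ_C equals the ratio of the cause-specific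 hazard ratios of the factual (consistency-identified) outcomes. -/
/-- Under cross-cause control stability (Assumption 5), the negative-control-outcome
assumption (Assumption 6) and exposure-deferral irrelevance (Assumption 7), the causal
parameter `θ_C = λ₁^{(v,0),A_v}/λ₁^{(∞,t),A_v}` equals the ratio of the cause-specific
hazard ratios of the factual outcomes. Here `l j a d A` denotes `λ_j^{(a,d),A}`, with
`a ∈ {v,∞}` coded by `av`/`aInf`, `d ∈ {0,t}` coded by `d0`/`dt`, and `A ∈ {A_v, A_∞}`
coded by `Av`/`AInf`. -/
theorem stmt_6
    (α : ℝ) (hα : 0 < α)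
    (l1_inft_Av l0_inft_Av l1_inft_AInf l0_inft_AInf : ℝ)
    (l1_vt_Av l0_vt_Av l1_v0_Av l0_v0_Av l1_inf0_AInf l0_inf0_AInf : ℝ)
    (h1 : 0 < l1_inft_Av) (h2 : 0 < l0_inft_Av)
    (h3 : 0 < l1_inft_AInf) (h4 : 0 < l0_inft_AInf)
    (h5 : 0 < l1_vt_Av) (h6 : 0 < l0_vt_Av)
    (h7 : 0 < l1_v0_Av) (h8 : 0 < l0_v0_Av)
    (h9 : 0 < l1_inf0_AInf) (h10 : 0 < l0_inf0_AInf)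
    -- Assumption 5 (cross-cause control stability)
    (hA5a : l1_inft_Av / l0_inft_Av = α)
    (hA5b : l1_inft_AInf / l0_inft_AInf = α)
    -- Assumption 6 (negative control outcome)
    (hA6 : l0_vt_Av = l0_inft_Av)
    -- Assumption 7 (exposure deferral irrelevance)
    (hA7a : l1_vt_Av = l1_v0_Av) (hA7b : l0_vt_Av = l0_v0_Av)
    (hA7c : l1_inft_AInf = l1_inf0_AInf) (hA7d : l0_inft_AInf = l0_inf0_AInf) :
    l1_v0_Av / l1_inft_Av
      = (l1_v0_Av / l1_inf0_AInf) / (l0_v0_Av / l0_inf0_AInf) := by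
  have e1 : l1_inft_Av = α * l0_v0_Av := by
    rw [div_eq_iff h2.ne'] at hA5a
    rw [hA6] at hA7b
    rw [hA5a, hA7b]
  have e2 : l1_inf0_AInf = α * l0_inf0_AInf := by
    rw [div_eq_iff h4.ne'] at hA5b
    rw [← hA7c, ← hA7d, hA5b]
  rw [e1, e2]
  field_simp
end

section
/- Let (Ω, 𝓕, μ) be a probability space, let 𝓖_T ⊆ 𝓖_{TV} ⊆ 𝓕 be sub-σ-algebras (generated by T and by (T,V) respectively), and let J : Ω → {0,1} be a random variable. Let Q be a 𝓖_{TV}-measurable random variable with 0 < Q < 1 almost surely and E[J | 𝓖_{TV}] = Q almost surely. Let X be a bounded 𝓖_{TV}-measurable random variable, set W := Q(1−Q), assume E[W | 𝓖_T] > 0 almost surely, and define r := E[W·X | 𝓖_T] / E[W | 𝓖_T] and D := (X − r)·(J − Q). Then: (a) E[D] = 0; and (b) for every bounded 𝓖_T-measurable random variable g, E[D · g·(J − Q)] = 0. -/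
open MeasureTheory

/-- Core content of Lemma 1 (EIC of `β₀`): each coordinate of the candidate influence
function `D = (X − r)·(J − Q)` has mean zero, and is orthogonal in `L²(μ)` to the nuisance
scores `g(T)·(J − Q)` generated by perturbations of the unspecified function `α₀`. -/
theorem stmt_8 {Ω : Type*} (mT mTV : MeasurableSpace Ω) [mΩ : MeasurableSpace Ω] (μ : Measure Ω) [IsProbabilityMeasure μ]
    (hTTV : mT ≤ mTV) (hTV : mTV ≤ mΩ)
    (J : Ω → ℝ) (hJmeas : Measurable J) (hJ01 : ∀ ω, J ω = 0 ∨ J ω = 1)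
    (Q : Ω → ℝ) (hQmeas : StronglyMeasurable[mTV] Q)
    (hQ01 : ∀ᵐ ω ∂μ, 0 < Q ω ∧ Q ω < 1)
    (hQcond : μ[J|mTV] =ᵐ[μ] Q)
    (X : Ω → ℝ) (hXmeas : StronglyMeasurable[mTV] X) (C : ℝ) (hXbdd : ∀ ω, |X ω| ≤ C)
    (W : Ω → ℝ) (hW : W = fun ω => Q ω * (1 - Q ω))
    (hWpos : ∀ᵐ ω ∂μ, 0 < (μ[W|mT]) ω)
    (r : Ω → ℝ) (hr : r = fun ω => (μ[fun ω' => W ω' * X ω'|mT]) ω / (μ[W|mT]) ω)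
    (D : Ω → ℝ) (hD : D = fun ω => (X ω - r ω) * (J ω - Q ω)) :
    (∫ ω, D ω ∂μ) = 0
      ∧ ∀ (g : Ω → ℝ) (Cg : ℝ), StronglyMeasurable[mT] g → (∀ ω, |g ω| ≤ Cg) →
          (∫ ω, D ω * (g ω * (J ω - Q ω)) ∂μ) = 0 := by
  have hT : mT ≤ mΩ := hTTV.trans hTV
  set C' := max C 1 with hC'
  have hC'1 : (1:ℝ) ≤ C' := le_max_right _ _
  have hC'0 : (0:ℝ) ≤ C' := le_trans zero_le_one hC'1
  have hXC' : ∀ ω, |X ω| ≤ C' := fun ω => (hXbdd ω).trans (le_max_left _ _)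
  -- measurability
  have hQm : StronglyMeasurable[mΩ] Q := hQmeas.mono hTV
  have hXm : StronglyMeasurable[mΩ] X := hXmeas.mono hTV
  have hJm : StronglyMeasurable[mΩ] J := hJmeas.stronglyMeasurable.mono le_rfl
  have hWmeasTV : StronglyMeasurable[mTV] W := by
    rw [hW]; exact hQmeas.mul (stronglyMeasurable_const.sub hQmeas)
  have hWm : StronglyMeasurable[mΩ] W := hWmeasTV.mono hTV
  have hWXmeasTV : StronglyMeasurable[mTV] (fun ω => W ω * X ω) := hWmeasTV.mul hXmeas
  have hrmeasT : StronglyMeasurable[mT] r := by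
    rw [hr]
    exact (stronglyMeasurable_condExp.measurable.div
      stronglyMeasurable_condExp.measurable).stronglyMeasurable
  have hrm : StronglyMeasurable[mΩ] r := hrmeasT.mono hT
  -- integrability helper
  have bdd_int : ∀ (f : Ω → ℝ) (c : ℝ), AEStronglyMeasurable[mΩ] f μ →
      (∀ᵐ ω ∂μ, |f ω| ≤ c) → Integrable f μ := by
    intro f c hf hb
    exact (integrable_const c).mono' hf (by simpa [Real.norm_eq_abs] using hb)
  -- bounds
  have hJbd : ∀ ω, |J ω| ≤ 1 := by intro ω; rcases hJ01 ω with h | h <;> simp [h]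
  have hQbd : ∀ᵐ ω ∂μ, |Q ω| ≤ 1 := hQ01.mono fun ω h => abs_le.2 ⟨by linarith [h.1], h.2.le⟩
  have hWbd : ∀ᵐ ω ∂μ, 0 ≤ W ω ∧ W ω ≤ 1 := by
    filter_upwards [hQ01] with ω h
    simp only [hW]; constructor <;> nlinarith [h.1, h.2]
  have hWbd' : ∀ᵐ ω ∂μ, |W ω| ≤ 1 := hWbd.mono fun ω h => abs_le.2 ⟨by linarith [h.1], h.2⟩
  -- integrability facts
  have intJ : Integrable J μ := bdd_int J 1 hJm.aestronglyMeasurable (ae_of_all _ hJbd)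
  have intQ : Integrable Q μ := bdd_int Q 1 hQm.aestronglyMeasurable hQbd
  have intW : Integrable W μ := bdd_int W 1 hWm.aestronglyMeasurable hWbd'
  have intWX : Integrable (fun ω => W ω * X ω) μ := by
    refine bdd_int _ C' ((hWm.mul hXm).aestronglyMeasurable) ?_
    filter_upwards [hWbd'] with ω h
    rw [abs_mul]
    calc |W ω| * |X ω| ≤ 1 * C' := mul_le_mul h (hXC' ω) (abs_nonneg _) zero_le_one
      _ = C' := one_mul _
  -- bound on r
  have hCW : ∀ᵐ ω ∂μ, |W ω * X ω| ≤ C' * W ω := by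
    filter_upwards [hWbd] with ω h
    rw [abs_mul, abs_of_nonneg h.1]
    calc W ω * |X ω| ≤ W ω * C' := mul_le_mul_of_nonneg_left (hXC' ω) h.1
      _ = C' * W ω := mul_comm _ _
  have intCW : Integrable (fun ω => C' * W ω) μ := intW.const_mul C'
  have h1 : μ[fun ω => W ω * X ω|mT] ≤ᵐ[μ] μ[fun ω => C' * W ω|mT] :=
    condExp_mono intWX intCW (hCW.mono fun ω h => le_trans (le_abs_self _) h)
  have h2 : μ[fun ω => -(W ω * X ω)|mT] ≤ᵐ[μ] μ[fun ω => C' * W ω|mT] :=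
    condExp_mono intWX.neg intCW (hCW.mono fun ω h => le_trans (neg_le_abs _) h)
  have hneg : μ[fun ω => -(W ω * X ω)|mT] =ᵐ[μ] fun ω => -((μ[fun ω' => W ω' * X ω'|mT]) ω) := by
    have := condExp_neg (m := mT) (μ := μ) (fun ω => W ω * X ω)
    filter_upwards [this] with ω h
    exact h
  have hsm : μ[fun ω => C' * W ω|mT] =ᵐ[μ] fun ω => C' * (μ[W|mT]) ω := by
    have := condExp_smul (m := mT) (μ := μ) C' W
    filter_upwards [this] with ω h
    exact h
  have hrbd : ∀ᵐ ω ∂μ, |r ω| ≤ C' := by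
    filter_upwards [h1, h2, hneg, hsm, hWpos] with ω hA hB hN hS hw
    rw [hN] at hB
    rw [hS] at hA hB
    have habs : |(μ[fun ω' => W ω' * X ω'|mT]) ω| ≤ C' * (μ[W|mT]) ω := by
      rw [abs_le]; constructor <;> linarith
    simp only [hr]
    rw [abs_div, abs_of_pos hw, div_le_iff₀ hw]
    exact habs
  -- D : measurability and integrability
  have hDm : StronglyMeasurable[mΩ] D := by
    rw [hD]; exact (hXm.sub hrm).mul (hJm.sub hQm)
  have hJQbd : ∀ᵐ ω ∂μ, |J ω - Q ω| ≤ 2 := by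
    filter_upwards [hQbd] with ω h
    calc |J ω - Q ω| ≤ |J ω| + |Q ω| := abs_sub _ _
      _ ≤ 1 + 1 := add_le_add (hJbd ω) h
      _ = 2 := by norm_num
  have hXrbd : ∀ᵐ ω ∂μ, |X ω - r ω| ≤ 2 * C' := by
    filter_upwards [hrbd] with ω h
    calc |X ω - r ω| ≤ |X ω| + |r ω| := abs_sub _ _
      _ ≤ C' + C' := add_le_add (hXC' ω) h
      _ = 2 * C' := by ring
  have intJQ : Integrable (fun ω => J ω - Q ω) μ := intJ.sub intQ
  have intD : Integrable D μ := by
    refine bdd_int D (2 * C' * 2) hDm.aestronglyMeasurable ?_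
    filter_upwards [hXrbd, hJQbd] with ω hx hj
    rw [hD]
    calc |(X ω - r ω) * (J ω - Q ω)| = |X ω - r ω| * |J ω - Q ω| := abs_mul _ _
      _ ≤ (2 * C') * 2 := mul_le_mul hx hj (abs_nonneg _) (by linarith)
  -- conditional expectation of J - Q given mTV is 0
  have hJQcond : μ[fun ω => J ω - Q ω|mTV] =ᵐ[μ] 0 := by
    have hsub : μ[J - Q|mTV] =ᵐ[μ] μ[J|mTV] - μ[Q|mTV] := condExp_sub intJ intQ mTV
    have hQQ : μ[Q|mTV] = Q := condExp_of_stronglyMeasurable hTV hQmeas intQ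
    have : (fun ω => J ω - Q ω) = J - Q := rfl
    rw [this]
    refine hsub.trans ?_
    rw [hQQ]
    filter_upwards [hQcond] with ω h
    simp [h]
  -- r*W key cancellation : μ[(X - r) * W | mT] = 0 a.e.
  have intrW : Integrable (fun ω => r ω * W ω) μ := by
    refine bdd_int _ C' ((hrm.mul hWm).aestronglyMeasurable) ?_
    filter_upwards [hrbd, hWbd'] with ω h1 h2
    rw [abs_mul]
    calc |r ω| * |W ω| ≤ C' * 1 := mul_le_mul h1 h2 (abs_nonneg _) hC'0
      _ = C' := mul_one _
  have pullrW : μ[r * W|mT] =ᵐ[μ] r * μ[W|mT] :=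
    condExp_mul_of_stronglyMeasurable_left hrmeasT intrW intW
  have hzero : μ[fun ω => (X ω - r ω) * W ω|mT] =ᵐ[μ] 0 := by
    have e2 : (fun ω => (X ω - r ω) * W ω) = (fun ω => W ω * X ω) - r * W := by
      funext ω; simp [Pi.sub_apply, Pi.mul_apply]; ring
    rw [e2]
    refine (condExp_sub intWX intrW mT).trans ?_
    filter_upwards [pullrW, hWpos] with ω hp hw
    simp only [Pi.sub_apply, Pi.mul_apply, Pi.zero_apply]
    have hp' : (μ[fun ω => r ω * W ω|mT]) ω = r ω * (μ[W|mT]) ω := hp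
    rw [hp']
    simp only [hr]
    rw [div_mul_cancel₀ _ hw.ne', sub_self]
  constructor
  · -- part (a)
    have hXr : StronglyMeasurable[mTV] (fun ω => X ω - r ω) := hXmeas.sub (hrmeasT.mono hTTV)
    have hDeq : ((fun ω => X ω - r ω) * fun ω => J ω - Q ω) = D := by
      funext ω; simp only [hD, Pi.mul_apply]
    have intD' : Integrable ((fun ω => X ω - r ω) * fun ω => J ω - Q ω) μ := by
      rw [hDeq]; exact intD
    have hpull : μ[(fun ω => X ω - r ω) * fun ω => J ω - Q ω|mTV] =ᵐ[μ]
        (fun ω => X ω - r ω) * μ[fun ω => J ω - Q ω|mTV] :=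
      condExp_mul_of_stronglyMeasurable_left hXr intD' intJQ
    have hDcond : μ[D|mTV] =ᵐ[μ] 0 := by
      rw [← hDeq]
      refine hpull.trans ?_
      filter_upwards [hJQcond] with ω h
      simp only [Pi.mul_apply, Pi.zero_apply] at *
      rw [h, mul_zero]
    calc ∫ ω, D ω ∂μ = ∫ ω, (μ[D|mTV]) ω ∂μ := (integral_condExp hTV).symm
      _ = ∫ _ω, (0:ℝ) ∂μ := integral_congr_ae hDcond
      _ = 0 := integral_zero _ _
  · -- part (b)
    intro g Cg hgmeas hgbd
    set Cg' := max Cg 0 with hCg'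
    have hCg'0 : (0:ℝ) ≤ Cg' := le_max_right _ _
    have hgC' : ∀ ω, |g ω| ≤ Cg' := fun ω => (hgbd ω).trans (le_max_left _ _)
    have hgm : StronglyMeasurable[mΩ] g := hgmeas.mono hT
    set h := fun ω => (X ω - r ω) * g ω with hh
    have hhmTV : StronglyMeasurable[mTV] h :=
      (hXmeas.sub (hrmeasT.mono hTTV)).mul (hgmeas.mono hTTV)
    have hhm : StronglyMeasurable[mΩ] h := hhmTV.mono hTV
    have hhbd : ∀ᵐ ω ∂μ, |h ω| ≤ 2 * C' * Cg' := by
      filter_upwards [hXrbd] with ω hx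
      rw [hh, abs_mul]
      exact mul_le_mul hx (hgC' ω) (abs_nonneg _) (by linarith)
    set q := fun ω => (J ω - Q ω) * (J ω - Q ω) with hq
    have hqm : StronglyMeasurable[mΩ] q := (hJm.sub hQm).mul (hJm.sub hQm)
    have hqbd : ∀ᵐ ω ∂μ, |q ω| ≤ 4 := by
      filter_upwards [hJQbd] with ω hj
      rw [hq, abs_mul]
      calc |J ω - Q ω| * |J ω - Q ω| ≤ 2 * 2 := mul_le_mul hj hj (abs_nonneg _) (by norm_num)
        _ = 4 := by norm_num
    have intq : Integrable q μ := bdd_int q 4 hqm.aestronglyMeasurable hqbd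
    have inthq : Integrable (h * q) μ := by
      refine bdd_int _ (2 * C' * Cg' * 4) ((hhm.mul hqm).aestronglyMeasurable) ?_
      filter_upwards [hhbd, hqbd] with ω h1 h2
      simp only [Pi.mul_apply, abs_mul]
      exact mul_le_mul h1 h2 (abs_nonneg _) (by positivity)
    -- cond. exp. of q given mTV is W
    have condq : μ[q|mTV] =ᵐ[μ] W := by
      have int1 : Integrable ((fun ω => 1 - 2 * Q ω) * J) μ := by
        refine bdd_int _ 3 (((stronglyMeasurable_const.sub
          (stronglyMeasurable_const.mul hQm)).mul hJm).aestronglyMeasurable) ?_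
        filter_upwards [hQbd] with ω hQ1
        simp only [Pi.mul_apply, abs_mul]
        calc |1 - 2 * Q ω| * |J ω| ≤ 3 * 1 := by
              refine mul_le_mul ?_ (hJbd ω) (abs_nonneg _) (by norm_num)
              rw [abs_le] at hQ1 ⊢; constructor <;> linarith [hQ1.1, hQ1.2]
          _ = 3 := by norm_num
      have intQQ : Integrable (fun ω => Q ω * Q ω) μ := by
        refine bdd_int _ 1 ((hQm.mul hQm).aestronglyMeasurable) ?_
        filter_upwards [hQbd] with ω hQ1
        rw [abs_mul]
        calc |Q ω| * |Q ω| ≤ 1 * 1 := mul_le_mul hQ1 hQ1 (abs_nonneg _) zero_le_one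
          _ = 1 := one_mul _
      have e1 : q = ((fun ω => 1 - 2 * Q ω) * J) + fun ω => Q ω * Q ω := by
        funext ω
        rcases hJ01 ω with h0 | h0 <;>
          simp only [hq, Pi.add_apply, Pi.mul_apply, h0] <;> ring
      rw [e1]
      have hadd := condExp_add (m := mTV) int1 intQQ
      have hpull1 : μ[(fun ω => 1 - 2 * Q ω) * J|mTV] =ᵐ[μ]
          (fun ω => 1 - 2 * Q ω) * μ[J|mTV] :=
        condExp_mul_of_stronglyMeasurable_left
          (stronglyMeasurable_const.sub (stronglyMeasurable_const.mul hQmeas)) int1 intJ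
      have hQQ2 : μ[fun ω => Q ω * Q ω|mTV] = fun ω => Q ω * Q ω :=
        condExp_of_stronglyMeasurable hTV (hQmeas.mul hQmeas) intQQ
      refine hadd.trans ?_
      rw [hQQ2]
      filter_upwards [hpull1, hQcond] with ω e3 eQ
      simp only [Pi.add_apply, Pi.mul_apply] at *
      rw [e3, eQ, hW]
      ring
    -- step 1 : ∫ D·g·(J-Q) = ∫ h·W
    have key1 : (fun ω => D ω * (g ω * (J ω - Q ω))) = h * q := by
      funext ω
      simp only [hD, hh, hq, Pi.mul_apply]
      ring
    have condphi : μ[h * q|mTV] =ᵐ[μ] fun ω => h ω * W ω := by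
      refine (condExp_mul_of_stronglyMeasurable_left hhmTV inthq intq).trans ?_
      filter_upwards [condq] with ω e
      simp only [Pi.mul_apply]
      rw [e]
    have step1 : ∫ ω, D ω * (g ω * (J ω - Q ω)) ∂μ = ∫ ω, h ω * W ω ∂μ := by
      rw [key1]
      calc ∫ ω, (h * q) ω ∂μ = ∫ ω, (μ[h * q|mTV]) ω ∂μ := (integral_condExp hTV).symm
        _ = ∫ ω, h ω * W ω ∂μ := integral_congr_ae condphi
    -- step 2 : ∫ h·W = 0
    have intXrW : Integrable (fun ω => (X ω - r ω) * W ω) μ := by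
      refine bdd_int _ (2 * C') (((hXm.sub hrm).mul hWm).aestronglyMeasurable) ?_
      filter_upwards [hXrbd, hWbd'] with ω h1 h2
      rw [abs_mul]
      calc |X ω - r ω| * |W ω| ≤ 2 * C' * 1 := mul_le_mul h1 h2 (abs_nonneg _) (by linarith)
        _ = 2 * C' := mul_one _
    have key2 : (fun ω => h ω * W ω) = g * fun ω => (X ω - r ω) * W ω := by
      funext ω
      simp only [hh, Pi.mul_apply]
      ring
    have intgXrW : Integrable (g * fun ω => (X ω - r ω) * W ω) μ := by
      rw [← key2]
      refine bdd_int _ (2 * C' * Cg') ((hhm.mul hWm).aestronglyMeasurable) ?_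
      filter_upwards [hhbd, hWbd'] with ω h1 h2
      rw [abs_mul]
      calc |h ω| * |W ω| ≤ 2 * C' * Cg' * 1 := mul_le_mul h1 h2 (abs_nonneg _) (by positivity)
        _ = 2 * C' * Cg' := mul_one _
    have pull2 : μ[g * fun ω => (X ω - r ω) * W ω|mT] =ᵐ[μ]
        g * μ[fun ω => (X ω - r ω) * W ω|mT] :=
      condExp_mul_of_stronglyMeasurable_left hgmeas intgXrW intXrW
    have condzero : μ[g * fun ω => (X ω - r ω) * W ω|mT] =ᵐ[μ] 0 := by
      refine pull2.trans ?_
      filter_upwards [hzero] with ω e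
      simp only [Pi.mul_apply, Pi.zero_apply] at *
      rw [e, mul_zero]
    have step2 : ∫ ω, h ω * W ω ∂μ = 0 := by
      rw [key2]
      calc ∫ ω, (g * fun ω => (X ω - r ω) * W ω) ω ∂μ
          = ∫ ω, (μ[g * fun ω => (X ω - r ω) * W ω|mT]) ω ∂μ := (integral_condExp hT).symm
        _ = ∫ _ω, (0:ℝ) ∂μ := integral_congr_ae condzero
        _ = 0 := integral_zero _ _
    rw [step1, step2]
end
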